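/- arXiv:1703.04281 — 2 statements merged into one kernel-verified Lean document; each statement's English description precedes it below -/
import Mathlib

section
/- For every m ≥ 1 and every pair of distinct strings x1, x2 ∈ {0,1}^m of length m, there exists a string y consisting only of symbols 0 such that exactly one of the two strings 2^m x1 y and 2^m x2 y belongs to the language END. Consequently, the map sending x ∈ {0,1}^m to the left quotient { y ∈ {0,1,2}^* : 2^m x y ∈ END } is injective. -/
def LangEND : Set (List (Fin 3)) :=
  {w | 1 ≤ w.count 2 ∧ w.reverse.getD (w.count 2 - 1) 0 = 1}

lemma key (m i : ℕ) (hi : i < m) (x : List (Fin 3)) (hlen : x.length = m)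
    (hx : ∀ a ∈ x, a = 0 ∨ a = 1) :
    ((List.replicate m (2 : Fin 3) ++ x ++ List.replicate i 0) ∈ LangEND ↔
      x.getD i 0 = 1) := by
  have hc : (List.replicate m (2 : Fin 3) ++ x ++ List.replicate i 0).count 2 = m := by
    have h1 : x.count 2 = 0 := by
      rw [List.count_eq_zero]
      intro h; rcases hx _ h with h' | h' <;> simp at h'
    simp [List.count_append, h1, List.count_replicate]
  have hg : (List.replicate m (2 : Fin 3) ++ x ++ List.replicate i 0).reverse.getD (m - 1) 0
      = x.getD i 0 := by
    rw [List.reverse_append, List.reverse_append, List.reverse_replicate,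
      List.reverse_replicate]
    rw [List.getD_append_right _ _ _ _ (by simp; omega)]
    simp only [List.length_replicate]
    rw [List.getD_append _ _ _ _ (by simp [hlen]; omega)]
    rw [List.getD_eq_getElem _ _ (by simp [hlen]; omega), List.getElem_reverse,
      List.getD_eq_getElem _ _ (by omega)]
    congr 1
    simp [hlen]; omega
  simp only [LangEND, Set.mem_setOf_eq, hc, hg]
  exact and_iff_right (by omega)

theorem stmt_3 (m : ℕ) (hm : 1 ≤ m) (x1 x2 : List (Fin 3))
    (hx1len : x1.length = m) (hx2len : x2.length = m)
    (hx1 : ∀ a ∈ x1, a = 0 ∨ a = 1) (hx2 : ∀ a ∈ x2, a = 0 ∨ a = 1)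
    (hne : x1 ≠ x2) :
    (∃ y : List (Fin 3), (∀ a ∈ y, a = 0) ∧
      Xor' ((List.replicate m (2 : Fin 3) ++ x1 ++ y) ∈ LangEND)
           ((List.replicate m (2 : Fin 3) ++ x2 ++ y) ∈ LangEND)) ∧
    {y : List (Fin 3) | (List.replicate m (2 : Fin 3) ++ x1 ++ y) ∈ LangEND} ≠
      {y : List (Fin 3) | (List.replicate m (2 : Fin 3) ++ x2 ++ y) ∈ LangEND} := by
  obtain ⟨i, hi, hdiff⟩ : ∃ i, i < m ∧ x1.getD i 0 ≠ x2.getD i 0 := by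
    by_contra h
    push_neg at h
    apply hne
    apply List.ext_getElem (by omega)
    intro n h1 h2
    have := h n (by omega)
    rw [List.getD_eq_getElem x1 0 h1, List.getD_eq_getElem x2 0 h2] at this
    exact this
  have hmem : ∃ y : List (Fin 3), (∀ a ∈ y, a = 0) ∧
      Xor' ((List.replicate m (2 : Fin 3) ++ x1 ++ y) ∈ LangEND)
           ((List.replicate m (2 : Fin 3) ++ x2 ++ y) ∈ LangEND) := by
    refine ⟨List.replicate i 0, by simp, ?_⟩
    rw [Xor', key m i hi x1 hx1len hx1, key m i hi x2 hx2len hx2]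
    have h1 : x1.getD i 0 = 0 ∨ x1.getD i 0 = 1 := by
      rw [List.getD_eq_getElem _ _ (by omega)]
      exact hx1 _ (List.getElem_mem _)
    have h2 : x2.getD i 0 = 0 ∨ x2.getD i 0 = 1 := by
      rw [List.getD_eq_getElem _ _ (by omega)]
      exact hx2 _ (List.getElem_mem _)
    rcases h1 with h1 | h1 <;> rcases h2 with h2 | h2 <;>
      simp_all <;> exact hdiff (h1.trans h2.symm)
  refine ⟨hmem, ?_⟩
  obtain ⟨y, -, hxor⟩ := hmem
  intro heq
  have hy := Set.ext_iff.mp heq y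
  simp only [Set.mem_setOf_eq] at hy
  rcases hxor with ⟨hA, hB⟩ | ⟨hB, hA⟩
  · exact hB (hy.mp hA)
  · exact hA (hy.mpr hB)
end

section
/- Let x, y ∈ {1,2}^*, let k ≥ 1 be an integer, and let v_f = M_$(k) · P(y) · M_0 · P(x) · (0,0,1,0,0)^T ∈ ℝ^5. If x is a palindrome (x = x^r) and y is not a palindrome (y ≠ y^r), then (|v_f[1]| + |v_f[2]|) / (|v_f[1]| + |v_f[2]| + |v_f[3]| + |v_f[4]| + |v_f[5]|) ≥ 2k/(2k+1), and |v_f[5]| / (Σ_{i=1}^5 |v_f[i]|) ≤ 1/(2k+1). -/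
/-- Base-3 encoding of a string over `{1,2}` (a symbol `d : Fin 2` represents the
digit `d + 1`): `e(ε) = 0` and `e(u·d) = 3·e(u) + d` for `d ∈ {1,2}`. -/
def enc (u : List (Fin 2)) : ℕ :=
  u.foldl (fun acc d => 3 * acc + (d.val + 1)) 0

/-- The affine transition matrix `M_1` for the symbol `1`. -/
def M1 : Matrix (Fin 5) (Fin 5) ℝ :=
  !![4, 1, 1, 1, 1;
     0, 1, 1, 0, 0;
     0, 0, 3, 0, 0;
     0, 0, 0, 1, 0;
     -3, -1, -4, -1, 0]

/-- The affine transition matrix `M_2` for the symbol `2`. -/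
def M2 : Matrix (Fin 5) (Fin 5) ℝ :=
  !![5, 2, 2, 2, 2;
     0, 1, 2, 0, 0;
     0, 0, 3, 0, 0;
     0, 0, 0, 1, 0;
     -4, -2, -6, -2, -1]

/-- The affine transition matrix `M_0` for the symbol `0`. -/
def M0 : Matrix (Fin 5) (Fin 5) ℝ :=
  !![0, 0, 0, 0, 0;
     0, 0, 0, 0, 0;
     1, 1, 1, 1, 1;
     1, -1, 0, 0, 0;
     -1, 1, 0, 0, 0]

/-- The affine transition matrix `M_$(k)` for the right end-marker. -/
def Mdollar (k : ℝ) : Matrix (Fin 5) (Fin 5) ℝ :=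
  !![k, -k, 0, 0, 0;
     -k, k, 0, 0, 0;
     0, 0, 0, k, 0;
     0, 0, 0, -k, 0;
     1, 1, 1, 1, 1]

/-- The transition matrix associated with a symbol of `{1,2}`. -/
def Msym (d : Fin 2) : Matrix (Fin 5) (Fin 5) ℝ := if d = 0 then M1 else M2

/-- `applyStr u v = M_{u[n]} ⋯ M_{u[2]} M_{u[1]} v`. -/
def applyStr (u : List (Fin 2)) (v : Fin 5 → ℝ) : Fin 5 → ℝ :=
  u.foldl (fun w d => (Msym d).mulVec w) v



lemma enc_aux (u : List (Fin 2)) : ∀ a : ℕ,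
    u.foldl (fun acc d => 3 * acc + (d.val + 1)) a = a * 3 ^ u.length + enc u := by
  induction u with
  | nil => intro a; simp [enc]
  | cons d w ih =>
    intro a
    simp only [List.foldl_cons, List.length_cons, enc]
    rw [ih, ih (0 * 3 + (d.val + 1))]
    ring

lemma enc_snoc (u : List (Fin 2)) (d : Fin 2) :
    enc (u ++ [d]) = 3 * enc u + (d.val + 1) := by
  simp [enc, List.foldl_append]

lemma enc_cons (d : Fin 2) (u : List (Fin 2)) :
    enc (d :: u) = (d.val + 1) * 3 ^ u.length + enc u := by
  show u.foldl _ (3 * 0 + (d.val + 1)) = _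
  rw [enc_aux]; ring

lemma enc_inj : ∀ u v : List (Fin 2), enc u = enc v → u = v := by
  intro u
  induction u using List.reverseRecOn with
  | nil =>
    intro v
    induction v using List.reverseRecOn with
    | nil => simp
    | append_singleton w d _ =>
      intro h
      rw [enc_snoc] at h
      simp only [enc, List.foldl_nil] at h
      omega
  | append_singleton w d ih =>
    intro v
    induction v using List.reverseRecOn with
    | nil =>
      intro h
      rw [enc_snoc] at h
      simp only [enc, List.foldl_nil] at h
      omega
    | append_singleton w' d' _ =>
      intro h
      rw [enc_snoc, enc_snoc] at h
      have hd : d.val < 2 := d.isLt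
      have hd' : d'.val < 2 := d'.isLt
      have h1 : d.val = d'.val := by omega
      have h2 : enc w = enc w' := by omega
      rw [ih w' h2, Fin.val_injective h1]

noncomputable def vecOf (u : List (Fin 2)) : Fin 5 → ℝ :=
  ![(enc u : ℝ), (enc u.reverse : ℝ), 3 ^ u.length, 0,
    1 - enc u - enc u.reverse - 3 ^ u.length]

lemma applyStr_snoc (u : List (Fin 2)) (d : Fin 2) (v : Fin 5 → ℝ) :
    applyStr (u ++ [d]) v = (Msym d).mulVec (applyStr u v) := by
  simp [applyStr, List.foldl_append]

lemma applyStr_vec (u : List (Fin 2)) :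
    applyStr u ![0, 0, 1, 0, 0] = vecOf u := by
  induction u using List.reverseRecOn with
  | nil => funext i; fin_cases i <;> simp [vecOf, applyStr, enc]
  | append_singleton w d ih =>
    rw [applyStr_snoc, ih]
    funext i
    fin_cases d <;> fin_cases i <;>
      simp [vecOf, Msym, M1, M2, Matrix.mulVec, dotProduct,
        Fin.sum_univ_five, enc_snoc, enc_cons, List.reverse_append] <;>
      push_cast <;> ring

lemma M0_step (u : List (Fin 2)) (hu : u = u.reverse) :
    M0.mulVec (vecOf u) = ![0, 0, 1, 0, 0] := by
  funext i
  fin_cases i <;>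
    simp [vecOf, M0, Matrix.mulVec, dotProduct, Fin.sum_univ_five, ← hu] <;>
    ring

lemma Mdollar_step (K : ℝ) (u : List (Fin 2)) :
    (Mdollar K).mulVec (vecOf u) =
      ![K * ((enc u : ℝ) - enc u.reverse), -(K * ((enc u : ℝ) - enc u.reverse)), 0, 0, 1] := by
  funext i
  fin_cases i <;>
    simp [vecOf, Mdollar, Matrix.mulVec, dotProduct, Fin.sum_univ_five] <;>
    ring

theorem stmt_10 (x y : List (Fin 2)) (k : ℕ) (hk : 1 ≤ k)
    (hx : x = x.reverse) (hy : y ≠ y.reverse) :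
    (2 * (k : ℝ)) / (2 * (k : ℝ) + 1) ≤
      (|(Mdollar (k : ℝ)).mulVec (applyStr y (M0.mulVec (applyStr x ![0, 0, 1, 0, 0]))) 0| +
       |(Mdollar (k : ℝ)).mulVec (applyStr y (M0.mulVec (applyStr x ![0, 0, 1, 0, 0]))) 1|) /
      (∑ i : Fin 5,
        |(Mdollar (k : ℝ)).mulVec (applyStr y (M0.mulVec (applyStr x ![0, 0, 1, 0, 0]))) i|) ∧
    |(Mdollar (k : ℝ)).mulVec (applyStr y (M0.mulVec (applyStr x ![0, 0, 1, 0, 0]))) 4| /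
      (∑ i : Fin 5,
        |(Mdollar (k : ℝ)).mulVec (applyStr y (M0.mulVec (applyStr x ![0, 0, 1, 0, 0]))) i|) ≤
      1 / (2 * (k : ℝ) + 1) := by
  have h0 : M0.mulVec (applyStr x ![0, 0, 1, 0, 0]) = ![0, 0, 1, 0, 0] := by
    rw [applyStr_vec, M0_step x hx]
  rw [h0, applyStr_vec, Mdollar_step]
  set D : ℝ := (enc y : ℝ) - enc y.reverse with hD
  have hne : enc y ≠ enc y.reverse := fun h => hy (enc_inj _ _ h)
  have hD1 : 1 ≤ |D| := by
    have : ((enc y : ℤ) - enc y.reverse) ≠ 0 := by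
      intro h; apply hne; omega
    have h1 : (1 : ℤ) ≤ |(enc y : ℤ) - enc y.reverse| := Int.one_le_abs this
    have : ((1 : ℤ) : ℝ) ≤ (|(enc y : ℤ) - enc y.reverse| : ℝ) := by exact_mod_cast h1
    simpa [hD] using this
  have hK : (1 : ℝ) ≤ (k : ℝ) := by exact_mod_cast hk
  have hKpos : (0 : ℝ) < (k : ℝ) := by linarith
  have hsum : (∑ i : Fin 5,
      |(![(k : ℝ) * D, -((k : ℝ) * D), 0, 0, 1] : Fin 5 → ℝ) i|) = 2 * (k : ℝ) * |D| + 1 := by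
    simp [Fin.sum_univ_five, abs_mul, abs_of_pos hKpos]
    ring
  have e0 : |(![(k : ℝ) * D, -((k : ℝ) * D), 0, 0, 1] : Fin 5 → ℝ) 0| = (k : ℝ) * |D| := by
    simp [abs_mul, abs_of_pos hKpos]
  have e1 : |(![(k : ℝ) * D, -((k : ℝ) * D), 0, 0, 1] : Fin 5 → ℝ) 1| = (k : ℝ) * |D| := by
    simp [abs_mul, abs_of_pos hKpos]
  have e4 : |(![(k : ℝ) * D, -((k : ℝ) * D), 0, 0, 1] : Fin 5 → ℝ) 4| = 1 := by simp
  rw [hsum, e0, e1, e4]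
  have hpos1 : (0 : ℝ) < 2 * (k : ℝ) + 1 := by linarith
  have hpos2 : (0 : ℝ) < 2 * (k : ℝ) * |D| + 1 := by nlinarith
  constructor
  · rw [div_le_div_iff₀ hpos1 hpos2]
    nlinarith
  · rw [div_le_div_iff₀ hpos2 hpos1]
    nlinarith
end
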